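/- arXiv:1611.10188 — 2 statements merged into one kernel-verified Lean document; each statement's English description precedes it below -/
import Mathlib

section
/- Let R be a commutative ring, let ω ∈ R satisfy 1 + ω + ω² = 0, let u, v, t ∈ R, and let k be a non-negative integer. Then (u + vt)_k (u + vωt)_k (u + vω²t)_k − ((u)_k)³ lies in the ideal of R generated by t³. In particular, for an odd prime p, p-adic integers u, v, ω ∈ ℤ_p with 1 + ω + ω² = 0, one has (u+vp)_k (u+vpω)_k (u+vpω²)_k ≡ ((u)_k)³ (mod p³ℤ_p). -/
open Finset Polynomial

lemma poch_aux (R : Type) [CommRing R] (ω u v t : R) (h : 1 + ω + ω^2 = 0) (k : ℕ) :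
    (ascPochhammer R k).eval (u + v*t) * (ascPochhammer R k).eval (u + v*ω*t) *
        (ascPochhammer R k).eval (u + v*ω^2*t) - ((ascPochhammer R k).eval u)^3 ∈
      Ideal.span ({t^3} : Set R) := by
  have hω3 : ω^3 = 1 := by linear_combination (ω - 1) * h
  rw [← Ideal.Quotient.eq_zero_iff_mem, map_sub, sub_eq_zero]
  set φ := Ideal.Quotient.mk (Ideal.span ({t^3} : Set R)) with hφ
  have ht3 : φ (t^3) = 0 := Ideal.Quotient.eq_zero_iff_mem.2 (Ideal.mem_span_singleton_self _)
  induction k with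
  | zero => simp
  | succ n ih =>
    have key : φ ((u + v*t + n) * ((u + v*ω*t + n) * (u + v*ω^2*t + n))) = φ ((u + n)^3) := by
      have : (u + v*t + (n:R)) * ((u + v*ω*t + n) * (u + v*ω^2*t + n))
          = (u + (n:R))^3 + v^3 * t^3 := by
        linear_combination (v*t*(u+(n:R))^2 + v^2*t^2*(u+(n:R))) * h
          + (v^3*t^3 + v^2*t^2*(u+(n:R)))*hω3
      rw [this, map_add, map_mul, ht3, mul_zero, add_zero]
    simp only [ascPochhammer_succ_eval]
    calc φ ((ascPochhammer R n).eval (u + v*t) * (u + v*t + n) *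
            ((ascPochhammer R n).eval (u + v*ω*t) * (u + v*ω*t + n)) *
            ((ascPochhammer R n).eval (u + v*ω^2*t) * (u + v*ω^2*t + n)))
        = φ ((ascPochhammer R n).eval (u + v*t) * (ascPochhammer R n).eval (u + v*ω*t) *
            (ascPochhammer R n).eval (u + v*ω^2*t)) *
            φ ((u + v*t + n) * ((u + v*ω*t + n) * (u + v*ω^2*t + n))) := by
          rw [← map_mul]; ring_nf
      _ = φ (((ascPochhammer R n).eval u)^3) * φ ((u + (n:R))^3) := by rw [ih, key]
      _ = φ (((ascPochhammer R n).eval u * (u + n))^3) := by rw [← map_mul, ← mul_pow]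

/-- If `1 + ω + ω² = 0` in a commutative ring, then
`(u+vt)_k (u+vωt)_k (u+vω²t)_k ≡ ((u)_k)³` modulo the ideal generated by `t³`.
In particular, for an odd prime `p` and `u, v, ω ∈ ℤ_p` with `1 + ω + ω² = 0`,
`(u+vp)_k (u+vpω)_k (u+vpω²)_k ≡ ((u)_k)³ (mod p³ℤ_p)`. -/
theorem pochhammer_cube_roots_congruence :
    (∀ (R : Type) [CommRing R], ∀ (ω u v t : R), 1 + ω + ω^2 = 0 → ∀ k : ℕ,
      (ascPochhammer R k).eval (u + v*t) * (ascPochhammer R k).eval (u + v*ω*t) *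
          (ascPochhammer R k).eval (u + v*ω^2*t) - ((ascPochhammer R k).eval u)^3 ∈
        Ideal.span {t^3}) ∧
    (∀ (p : ℕ) [Fact p.Prime], Odd p → ∀ (u v ω : ℤ_[p]), 1 + ω + ω^2 = 0 → ∀ k : ℕ,
      (ascPochhammer ℤ_[p] k).eval (u + v*(p : ℤ_[p])) *
          (ascPochhammer ℤ_[p] k).eval (u + v*(p : ℤ_[p])*ω) *
          (ascPochhammer ℤ_[p] k).eval (u + v*(p : ℤ_[p])*ω^2) -
          ((ascPochhammer ℤ_[p] k).eval u)^3 ∈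
        Ideal.span {(p : ℤ_[p])^3}) := by
  refine ⟨poch_aux, ?_⟩
  intro p _ _ u v ω h k
  have := poch_aux ℤ_[p] ω u v (p : ℤ_[p]) h k
  have e0 : u + v*(p : ℤ_[p])*1 = u + v*(p : ℤ_[p]) := by ring
  have e1 : u + v*ω*(p : ℤ_[p]) = u + v*(p : ℤ_[p])*ω := by ring
  have e2 : u + v*ω^2*(p : ℤ_[p]) = u + v*(p : ℤ_[p])*ω^2 := by ring
  rwa [e1, e2] at this
end

section
/- Let p ≥ 5 be a prime and let α be a p-adic integer whose canonical residue ⟨α⟩_p (the unique integer r with 0 ≤ r ≤ p-1 and α ≡ r (mod p)) satisfies 0 ≤ ⟨α⟩_p ≤ ⌊p/4⌋. Then for every integer k with 0 ≤ k ≤ (p-1)/2, the p-adic numbers (1+2α)_k and (1/2-2α)_k are p-adic units, i.e. ‖(1+2α)_k‖_p = 1 and ‖(1/2-2α)_k‖_p = 1. -/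
open Finset Polynomial

variable {p : ℕ} [Fact p.Prime]

lemma coe2 {p : ℕ} [Fact p.Prime] : ((2:ℤ_[p]):ℚ_[p]) = 2 := rfl
lemma coe4 {p : ℕ} [Fact p.Prime] : ((4:ℤ_[p]):ℚ_[p]) = 4 := rfl

lemma unit_of_toZMod_ne_zero (z : ℤ_[p]) (h : PadicInt.toZMod z ≠ 0) :
    ‖(z : ℚ_[p])‖ = 1 := by
  rw [← PadicInt.norm_def]
  have hd : ¬ (p : ℤ_[p]) ∣ z := by
    rw [← PadicInt.norm_lt_one_iff_dvd]
    intro hlt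
    apply h
    have : z ∈ RingHom.ker (PadicInt.toZMod (p := p)) := by
      rw [PadicInt.ker_toZMod, PadicInt.maximalIdeal_eq_span_p, Ideal.mem_span_singleton,
        ← PadicInt.norm_lt_one_iff_dvd]
      exact hlt
    exact this
  have h1 : ‖z‖ ≤ 1 := PadicInt.norm_le_one z
  rcases lt_or_eq_of_le h1 with h2 | h2
  · exact absurd ((PadicInt.norm_lt_one_iff_dvd z).mp h2) hd
  · exact h2

lemma asc_norm_one (k : ℕ) (x : ℚ_[p]) (h : ∀ i, i < k → ‖x + i‖ = 1) :
    ‖(ascPochhammer ℚ_[p] k).eval x‖ = 1 := by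
  induction k with
  | zero => simp
  | succ n ih =>
    rw [ascPochhammer_succ_eval, norm_mul, ih (fun i hi => h i (hi.trans (Nat.lt_succ_self n))),
      one_mul]
    exact h n (Nat.lt_succ_self n)

/-- For a prime `p ≥ 5` and a `p`-adic integer `α` with `0 ≤ ⟨α⟩_p ≤ ⌊p/4⌋`,
the Pochhammer symbols `(1+2α)_k` and `(1/2-2α)_k` are `p`-adic units
for all `0 ≤ k ≤ (p-1)/2`. -/
theorem pochhammer_denominators_are_units (p : ℕ) [Fact p.Prime] (hp5 : 5 ≤ p)
    (α : ℤ_[p]) (hα : (PadicInt.toZMod α).val ≤ p / 4) :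
    ∀ k : ℕ, k ≤ (p - 1) / 2 →
      ‖(ascPochhammer ℚ_[p] k).eval (1 + 2*(α : ℚ_[p]))‖ = 1 ∧
      ‖(ascPochhammer ℚ_[p] k).eval (1/2 - 2*(α : ℚ_[p]))‖ = 1 := by
  have hodd : p % 2 = 1 := Nat.odd_iff.mp ((Fact.out : p.Prime).odd_of_ne_two (by omega))
  set r : ℕ := (PadicInt.toZMod α).val with hr
  have hαr : PadicInt.toZMod α = (r : ZMod p) := (ZMod.natCast_zmod_val _).symm
  intro k hk
  constructor
  · apply asc_norm_one k
    intro i hi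
    have : (1 : ℚ_[p]) + 2*(α : ℚ_[p]) + i = ((1 + 2*α + i : ℤ_[p]) : ℚ_[p]) := by push_cast [map_ofNat, coe2, coe4]; ring
    rw [this]
    apply unit_of_toZMod_ne_zero
    have : PadicInt.toZMod (1 + 2*α + (i : ℤ_[p])) = ((1 + 2*r + i : ℕ) : ZMod p) := by
      push_cast [map_ofNat, map_add, map_mul, map_one, map_natCast, hαr]; ring
    rw [this, Ne, ZMod.natCast_eq_zero_iff]
    intro hdvd
    have := Nat.le_of_dvd (by omega) hdvd
    omega
  · apply asc_norm_one k
    intro i hi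
    have h2 : ((2 : ℤ_[p]) : ℚ_[p]) = (2 : ℚ_[p]) := by push_cast [map_ofNat, coe2, coe4]; ring
    have hn2 : ‖(2 : ℚ_[p])‖ = 1 := by
      rw [← h2]
      apply unit_of_toZMod_ne_zero
      have : PadicInt.toZMod (2 : ℤ_[p]) = ((2 : ℕ) : ZMod p) := by push_cast [map_ofNat, coe2, coe4]; ring
      rw [this, Ne, ZMod.natCast_eq_zero_iff]
      intro hdvd
      have := Nat.le_of_dvd (by omega) hdvd
      omega
    have heq : (1/2 : ℚ_[p]) - 2*(α : ℚ_[p]) + i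
        = (2 : ℚ_[p])⁻¹ * ((1 - 4*α + 2*i : ℤ_[p]) : ℚ_[p]) := by
      have h2ne : (2 : ℚ_[p]) ≠ 0 := by
        intro h; rw [h] at hn2; simp at hn2
      field_simp
      push_cast [coe2, coe4]
      ring
    rw [heq, norm_mul, norm_inv, hn2, inv_one, one_mul]
    apply unit_of_toZMod_ne_zero
    have : PadicInt.toZMod (1 - 4*α + 2*(i : ℤ_[p])) = ((1 + 2*i - 4*r : ℤ) : ZMod p) := by
      push_cast [map_ofNat, map_add, map_sub, map_mul, map_one, map_natCast, hαr]; ring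
    rw [this, Ne, ZMod.intCast_zmod_eq_zero_iff_dvd]
    intro hdvd
    have h0 : (1 + 2*(i:ℤ) - 4*r ≠ 0) := by omega
    apply h0
    apply Int.eq_zero_of_dvd_of_natAbs_lt_natAbs hdvd
    have : (1 + 2*(i:ℤ) - 4*(r:ℤ)).natAbs < p := by
      rcases le_or_gt (4*(r:ℤ)) (1 + 2*i) with h | h <;> [skip; skip] <;> omega
    simpa using this
end
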